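/- arXiv:2302.04690 — 8 statements merged into one kernel-verified Lean document; each statement's English description precedes it below -/
import Mathlib

section
/- The Horn matrix H is copositive. -/
/-!
The quadratic form of the Horn matrix can be written in two ways as a square plus two
products of coordinates. On the nonnegative orthant every term of the first is nonnegative
when `x₂ ≤ x₄`, every term of the second when `x₄ ≤ x₂`.
-/

open Matrix

/-- The Horn matrix. -/
def hornMatrix : Matrix (Fin 5) (Fin 5) ℝ :=
  !![1, 1, -1, -1, 1;
     1, 1, 1, -1, -1;
     -1, 1, 1, 1, -1;
     -1, -1, 1, 1, 1;
     1, -1, -1, 1, 1]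

lemma dotProduct_hornMatrix_mulVec_eq (x : Fin 5 → ℝ) :
    x ⬝ᵥ hornMatrix *ᵥ x =
      (x 0 + x 1 + x 2 - x 3 - x 4) ^ 2 + 4 * x 2 * x 3 + 4 * x 0 * (x 4 - x 2) := by
  simp only [dotProduct, mulVec, hornMatrix, of_apply, cons_val', cons_val_fin_one,
    Fin.sum_univ_five, cons_val_zero, cons_val_one, cons_val, one_mul, neg_mul]
  ring

lemma dotProduct_hornMatrix_mulVec_eq' (x : Fin 5 → ℝ) :
    x ⬝ᵥ hornMatrix *ᵥ x =
      (x 0 + x 1 - x 2 - x 3 + x 4) ^ 2 + 4 * x 3 * x 4 + 4 * x 1 * (x 2 - x 4) := by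
  rw [dotProduct_hornMatrix_mulVec_eq]
  ring

/-- The Horn matrix is copositive. -/
theorem hornMatrix_copositive :
    ∀ x : Fin 5 → ℝ, (∀ i, 0 ≤ x i) → 0 ≤ x ⬝ᵥ hornMatrix.mulVec x := by
  intro x hx
  have four_mul_nonneg {a b : ℝ} (ha : 0 ≤ a) (hb : 0 ≤ b) : 0 ≤ 4 * a * b := by positivity
  rcases le_total (x 2) (x 4) with h | h
  · rw [dotProduct_hornMatrix_mulVec_eq]
    exact add_nonneg (add_nonneg (sq_nonneg _) (four_mul_nonneg (hx 2) (hx 3)))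
      (four_mul_nonneg (hx 0) (sub_nonneg.2 h))
  · rw [dotProduct_hornMatrix_mulVec_eq']
    exact add_nonneg (add_nonneg (sq_nonneg _) (four_mul_nonneg (hx 3) (hx 4)))
      (four_mul_nonneg (hx 1) (sub_nonneg.2 h))
end

section
/- The polynomial identity (∑_{i=1}^5 x_i²)·(x∘²)^T H x∘² equals the explicit sum of squares: x₁²(x₁²+x₂²+x₅²−x₃²−x₄²)² + x₂²(x₁²+x₂²+x₃²−x₄²−x₅²)² + x₃²(x₂²+x₃²+x₄²−x₅²−x₁²)² + x₄²(x₃²+x₄²+x₅²−x₁²−x₂²)² + x₅²(x₁²+x₄²+x₅²−x₂²−x₃²)² + 4x₁²x₂²x₅² + 4x₁²x₂²x₃² + 4x₂²x₃²x₄² + 4x₃²x₄²x₅² + 4x₄²x₅²x₁². -/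
open Matrix

/-- Parrilo's explicit sum-of-squares identity for
`(∑ᵢ xᵢ²)·(x∘²)ᵀ H x∘²` with `H` the Horn matrix. -/
theorem horn_sos_identity (x : Fin 5 → ℝ) :
    (∑ i, x i ^ 2) * ((fun i => x i ^ 2) ⬝ᵥ hornMatrix.mulVec (fun i => x i ^ 2)) =
      x 0 ^ 2 * (x 0 ^ 2 + x 1 ^ 2 + x 4 ^ 2 - x 2 ^ 2 - x 3 ^ 2) ^ 2
    + x 1 ^ 2 * (x 0 ^ 2 + x 1 ^ 2 + x 2 ^ 2 - x 3 ^ 2 - x 4 ^ 2) ^ 2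
    + x 2 ^ 2 * (x 1 ^ 2 + x 2 ^ 2 + x 3 ^ 2 - x 4 ^ 2 - x 0 ^ 2) ^ 2
    + x 3 ^ 2 * (x 2 ^ 2 + x 3 ^ 2 + x 4 ^ 2 - x 0 ^ 2 - x 1 ^ 2) ^ 2
    + x 4 ^ 2 * (x 0 ^ 2 + x 3 ^ 2 + x 4 ^ 2 - x 1 ^ 2 - x 2 ^ 2) ^ 2
    + 4 * x 0 ^ 2 * x 1 ^ 2 * x 4 ^ 2
    + 4 * x 0 ^ 2 * x 1 ^ 2 * x 2 ^ 2
    + 4 * x 1 ^ 2 * x 2 ^ 2 * x 3 ^ 2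
    + 4 * x 2 ^ 2 * x 3 ^ 2 * x 4 ^ 2
    + 4 * x 3 ^ 2 * x 4 ^ 2 * x 0 ^ 2 := by
  have hm : hornMatrix.mulVec (fun i => x i ^ 2) =
      ![x 0 ^ 2 + x 1 ^ 2 - x 2 ^ 2 - x 3 ^ 2 + x 4 ^ 2,
        x 0 ^ 2 + x 1 ^ 2 + x 2 ^ 2 - x 3 ^ 2 - x 4 ^ 2,
        -x 0 ^ 2 + x 1 ^ 2 + x 2 ^ 2 + x 3 ^ 2 - x 4 ^ 2,
        -x 0 ^ 2 - x 1 ^ 2 + x 2 ^ 2 + x 3 ^ 2 + x 4 ^ 2,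
        x 0 ^ 2 - x 1 ^ 2 - x 2 ^ 2 + x 3 ^ 2 + x 4 ^ 2] := by
    funext i
    fin_cases i <;>
      simp [hornMatrix, mulVec, dotProduct, Fin.sum_univ_five] <;> ring
  rw [hm]
  simp [dotProduct, Fin.sum_univ_five]
  ring
end

section
/- The Horn matrix H cannot be written as P + N with P positive semidefinite and N entrywise nonnegative. -/
open Matrix

/-!
The vectors `e i + e (i + 2)` (indices mod 5) are nonnegative zeros of the quadratic form of
the Horn matrix `H`. If `H = P + N` with `P ⪰ 0` and `N ≥ 0`, both `xᵀ P x` and `xᵀ N x` are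
nonnegative at such a zero `x`, hence both vanish, and `P x = 0`. So every row `r` of `P`
satisfies `r i + r (i + 2) = 0`, and since `2` has odd order in `ZMod 5` this forces `r = 0`.
Thus `P = 0` and `N = H`, which has negative entries.
-/

theorem Function.Antiperiodic.eq_zero_of_odd_nsmul_eq_zero {α β : Type*} [AddMonoid α]
    [AddGroup β] [IsAddTorsionFree β] {f : α → β} {c : α} (h : Function.Antiperiodic f c)
    {n : ℕ} (hn : Odd n) (hnc : n • c = 0) : f = 0 := by
  obtain ⟨k, rfl⟩ := hn
  funext x
  have hx := h.odd_nsmul_antiperiodic k x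
  rw [hnc, add_zero] at hx
  exact self_eq_neg.mp hx

namespace Matrix

variable {n : Type*} [Fintype n]

theorem dotProduct_mulVec_nonneg_of_nonneg {N : Matrix n n ℝ} (hN : ∀ i j, 0 ≤ N i j)
    {x : n → ℝ} (hx : 0 ≤ x) : 0 ≤ x ⬝ᵥ N *ᵥ x :=
  dotProduct_nonneg_of_nonneg hx fun i => dotProduct_nonneg_of_nonneg (hN i) hx

theorem PosSemidef.mulVec_eq_zero_of_dotProduct_add_mulVec_eq_zero {P N : Matrix n n ℝ}
    (hP : P.PosSemidef) (hN : ∀ i j, 0 ≤ N i j) {x : n → ℝ} (hx : 0 ≤ x)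
    (h : x ⬝ᵥ (P + N) *ᵥ x = 0) : P *ᵥ x = 0 := by
  rw [add_mulVec, dotProduct_add] at h
  have hPx : 0 ≤ x ⬝ᵥ P *ᵥ x := by simpa using hP.dotProduct_mulVec_nonneg x
  have hPx0 : x ⬝ᵥ P *ᵥ x = 0 := by linarith [dotProduct_mulVec_nonneg_of_nonneg hN hx]
  simpa [hPx0] using hP.dotProduct_mulVec_zero_iff x

end Matrix

def hornZero (i : Fin 5) : Fin 5 → ℝ :=
  Pi.single i 1 + Pi.single (i + 2) 1

theorem hornZero_nonneg (i : Fin 5) : 0 ≤ hornZero i :=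
  add_nonneg (Pi.single_nonneg.mpr zero_le_one) (Pi.single_nonneg.mpr zero_le_one)

theorem dotProduct_hornMatrix_mulVec_hornZero (i : Fin 5) :
    hornZero i ⬝ᵥ hornMatrix *ᵥ hornZero i = 0 := by
  fin_cases i <;> simp [hornZero, hornMatrix, dotProduct, mulVec, Fin.sum_univ_five]

theorem mulVec_hornZero_apply (M : Matrix (Fin 5) (Fin 5) ℝ) (i j : Fin 5) :
    (M *ᵥ hornZero i) j = M j i + M j (i + 2) := by
  simp [hornZero, mulVec_add]

/-- The Horn matrix cannot be written as `P + N` with `P` positive semidefinite and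
`N` entrywise nonnegative. -/
theorem hornMatrix_not_spn :
    ¬ ∃ (P N : Matrix (Fin 5) (Fin 5) ℝ),
      P.PosSemidef ∧ N.IsSymm ∧ (∀ i j, 0 ≤ N i j) ∧ hornMatrix = P + N := by
  rintro ⟨P, N, hP, -, hN, hH⟩
  have hker (i : Fin 5) : P *ᵥ hornZero i = 0 :=
    hP.mulVec_eq_zero_of_dotProduct_add_mulVec_eq_zero hN (hornZero_nonneg i)
      (hH ▸ dotProduct_hornMatrix_mulVec_hornZero i)
  have hrow (j : Fin 5) : Function.Antiperiodic (P j) 2 := fun i => by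
    have hj := congrFun (hker i) j
    rw [mulVec_hornZero_apply] at hj
    exact eq_neg_of_add_eq_zero_right hj
  have hP0 : P = 0 := by
    funext j
    exact (hrow j).eq_zero_of_odd_nsmul_eq_zero (n := 5) (by decide) (by decide)
  have hN02 : N 0 2 = hornMatrix 0 2 := by rw [hH, hP0, zero_add]
  have hH02 : hornMatrix 0 2 = -1 := rfl
  linarith [hN 0 2]
end

section
/- Let M be copositive with M = P + N where P is positive semidefinite and N entrywise nonnegative. If x ∈ ℝⁿ₊ satisfies x^T M x = 0, then P x = 0 and the principal submatrices of P and M indexed by the support S of x agree: P[S] = M[S]. -/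
open Matrix

/-!
Both `xᵀPx` (as `P ⪰ 0`) and `xᵀNx` (as `N ≥ 0` and `x ≥ 0`) are nonnegative and they add up
to `xᵀMx = 0`, so both vanish. For a positive semidefinite `P`, `xᵀPx = 0` forces `Px = 0`;
and `xᵀNx = ∑ᵢⱼ xᵢ Nᵢⱼ xⱼ` is a sum of nonnegative terms, so `Nᵢⱼ = 0` whenever `xᵢ, xⱼ > 0`.
-/

section NonnegQuadraticForm

variable {ι R : Type*} [Fintype ι] [Semiring R] [PartialOrder R] [IsOrderedRing R]
  {N : Matrix ι ι R} {x : ι → R}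

theorem Matrix.mulVec_nonneg (hN : ∀ i j, 0 ≤ N i j) (hx : ∀ i, 0 ≤ x i) (i : ι) :
    0 ≤ (N *ᵥ x) i :=
  Finset.sum_nonneg fun j _ => mul_nonneg (hN i j) (hx j)

theorem Matrix.entry_eq_zero_of_dotProduct_mulVec_eq_zero [NoZeroDivisors R]
    (hN : ∀ i j, 0 ≤ N i j) (hx : ∀ i, 0 ≤ x i) (hzero : x ⬝ᵥ N *ᵥ x = 0)
    {i j : ι} (hi : 0 < x i) (hj : 0 < x j) : N i j = 0 := by
  have hterm : x i * (N *ᵥ x) i = 0 :=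
    (Finset.sum_eq_zero_iff_of_nonneg fun k _ => mul_nonneg (hx k) (mulVec_nonneg hN hx k)).mp
      hzero i (Finset.mem_univ i)
  have hrow : (N *ᵥ x) i = 0 := (mul_eq_zero.mp hterm).resolve_left hi.ne'
  have hentry : N i j * x j = 0 :=
    (Finset.sum_eq_zero_iff_of_nonneg fun k _ => mul_nonneg (hN i k) (hx k)).mp
      hrow j (Finset.mem_univ j)
  exact (mul_eq_zero.mp hentry).resolve_right hj.ne'

end NonnegQuadraticForm

/-- If `M = P + N` with `P ⪰ 0` and `N ≥ 0` entrywise, and `x ≥ 0` is a zero of the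
quadratic form `xᵀMx`, then `Px = 0` and `P` and `M` agree on the principal submatrix
indexed by the support of `x`. -/
theorem k0_certificate_kernel {n : ℕ} (M P N : Matrix (Fin n) (Fin n) ℝ)
    (hP : P.PosSemidef) (hN : ∀ i j, 0 ≤ N i j) (hM : M = P + N)
    (x : Fin n → ℝ) (hx : ∀ i, 0 ≤ x i) (hzero : x ⬝ᵥ M.mulVec x = 0) :
    P.mulVec x = 0 ∧ ∀ i j, 0 < x i → 0 < x j → M i j = P i j := by
  have hPq : 0 ≤ x ⬝ᵥ P *ᵥ x := by simpa using hP.dotProduct_mulVec_nonneg x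
  have hNq : 0 ≤ x ⬝ᵥ N *ᵥ x := dotProduct_nonneg_of_nonneg hx (mulVec_nonneg hN hx)
  rw [hM, add_mulVec, dotProduct_add] at hzero
  obtain ⟨hPz, hNz⟩ := (add_eq_zero_iff_of_nonneg hPq hNq).mp hzero
  refine ⟨(hP.dotProduct_mulVec_zero_iff x).mp (by simpa using hPz), fun i j hi hj => ?_⟩
  simp [hM, entry_eq_zero_of_dotProduct_mulVec_eq_zero hN hx hNz hi hj]
end

section
/- For every 2×2 copositive matrix M = [[a,c],[c,b]] there is an identity x^T M x ≡ (√a·x₁ − √b·x₂)²(x₁+x₂) + 2(c+√(ab))(x₁x₂² + x₁²x₂) modulo the ideal generated by (x₁ + x₂ − 1); i.e., COP₂ = LAS_{Δ₂}^{(3)}. -/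
open MvPolynomial

/-- Every `2×2` copositive matrix `[[a,c],[c,b]]` admits a Lasserre-type certificate
of degree 3 on the simplex: `xᵀMx ≡ (√a x₁ − √b x₂)²(x₁+x₂) + 2(c+√(ab))(x₁x₂² + x₁²x₂)`
modulo the ideal generated by `x₁ + x₂ − 1`; i.e. `COP₂ = LAS_{Δ₂}^{(3)}`. -/
theorem cop2_las3 (a b c : ℝ)
    (hcop : ∀ x₁ x₂ : ℝ, 0 ≤ x₁ → 0 ≤ x₂ →
      0 ≤ a * x₁ ^ 2 + 2 * c * x₁ * x₂ + b * x₂ ^ 2) :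
    ∃ q : MvPolynomial (Fin 2) ℝ,
      C a * X 0 ^ 2 + C (2 * c) * X 0 * X 1 + C b * X 1 ^ 2 =
        (C (Real.sqrt a) * X 0 - C (Real.sqrt b) * X 1) ^ 2 * (X 0 + X 1)
        + C (2 * (c + Real.sqrt (a * b))) * (X 0 * X 1 ^ 2 + X 0 ^ 2 * X 1)
        + q * (X 0 + X 1 - 1) := by
  have ha : 0 ≤ a := by have := hcop 1 0 zero_le_one le_rfl; linarith
  have hb : 0 ≤ b := by have := hcop 0 1 le_rfl zero_le_one; linarith
  have hab : Real.sqrt (a * b) = Real.sqrt a * Real.sqrt b := Real.sqrt_mul ha b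
  have hCa : (C a : MvPolynomial (Fin 2) ℝ) = C (Real.sqrt a) ^ 2 := by
    rw [← map_pow, Real.sq_sqrt ha]
  have hCb : (C b : MvPolynomial (Fin 2) ℝ) = C (Real.sqrt b) ^ 2 := by
    rw [← map_pow, Real.sq_sqrt hb]
  refine ⟨-(C a * X 0 ^ 2 + C (2 * c) * X 0 * X 1 + C b * X 1 ^ 2), ?_⟩
  rw [hab, hCa, hCb]
  simp only [map_mul, map_pow, map_add, map_ofNat]
  ring
end

section
/- The polynomial x₁x₂ admits no representation x₁x₂ = σ₀ + x₁σ₁ + x₂σ₂ + x₃σ₃ + q(x₁+x₂+x₃−1) with σ₀,…,σ₃ sums of squares and q a polynomial; hence the Lasserre hierarchy for min{x₁x₂ : x ∈ Δ₃} does not converge finitely. -/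
open MvPolynomial

/-- A multivariate polynomial is a sum of squares. -/
def IsSOS (p : MvPolynomial (Fin 3) ℝ) : Prop :=
  ∃ (m : ℕ) (q : Fin m → MvPolynomial (Fin 3) ℝ), p = ∑ k, (q k) ^ 2

theorem comp_lem (f : Fin 3 → Polynomial ℝ) (s : ℝ) (p : MvPolynomial (Fin 3) ℝ) :
    Polynomial.eval s (MvPolynomial.aeval f p)
      = MvPolynomial.eval (fun i => Polynomial.eval s (f i)) p := by
  induction p using MvPolynomial.induction_on with
  | C a => simp
  | add p q hp hq => simp [hp, hq]
  | mul_X p i hp => simp [hp]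

theorem sos_nonneg {p : MvPolynomial (Fin 3) ℝ} (h : IsSOS p) (x : Fin 3 → ℝ) :
    0 ≤ MvPolynomial.eval x p := by
  obtain ⟨m, q, rfl⟩ := h
  simp only [map_sum, map_pow]
  exact Finset.sum_nonneg fun k _ => sq_nonneg _

theorem key (σ₀ σ₁ σ₂ σ₃ q : MvPolynomial (Fin 3) ℝ)
    (h0 : IsSOS σ₀) (h1 : IsSOS σ₁) (h3 : IsSOS σ₃)
    (heq : (X 0 * X 1 : MvPolynomial (Fin 3) ℝ) =
        σ₀ + X 0 * σ₁ + X 1 * σ₂ + X 2 * σ₃ + q * (X 0 + X 1 + X 2 - 1))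
    (t : ℝ) (ht0 : 0 < t) (ht1 : t < 1) :
    MvPolynomial.eval ![t, 0, 1 - t] σ₂ = t := by
  set f : Fin 3 → Polynomial ℝ :=
    ![Polynomial.C t, Polynomial.X, Polynomial.C (1 - t) - Polynomial.X] with hf
  set φ := MvPolynomial.aeval (R := ℝ) f with hφ
  have hfx0 : φ (X 0) = Polynomial.C t := by simp [hφ, hf]
  have hfx1 : φ (X 1) = Polynomial.X := by simp [hφ, hf]
  have hfx2 : φ (X 2) = Polynomial.C (1 - t) - Polynomial.X := by simp [hφ, hf]
  have hevalf : ∀ s : ℝ, (fun i => Polynomial.eval s (f i)) = ![t, s, 1 - t - s] := by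
    intro s; funext i; fin_cases i <;> simp [hf]
  have hc : ∀ (p : MvPolynomial (Fin 3) ℝ) (s : ℝ),
      Polynomial.eval s (φ p) = MvPolynomial.eval ![t, s, 1 - t - s] p := by
    intro p s; rw [hφ, comp_lem, hevalf s]
  have hker : φ (X 0 + X 1 + X 2 - 1) = 0 := by
    simp only [map_sub, map_add, map_one, hfx0, hfx1, hfx2]; ring
  have hid : Polynomial.C t * Polynomial.X =
      φ σ₀ + Polynomial.C t * φ σ₁ + Polynomial.X * φ σ₂
        + (Polynomial.C (1 - t) - Polynomial.X) * φ σ₃ := by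
    have h := congrArg φ heq
    simp only [map_add, map_mul, hfx0, hfx1, hfx2, hker, mul_zero, add_zero] at h
    exact h
  set A : Polynomial ℝ :=
    φ σ₀ + Polynomial.C t * φ σ₁ + (Polynomial.C (1 - t) - Polynomial.X) * φ σ₃ with hA
  have hAeval : ∀ s : ℝ, A.eval s =
      MvPolynomial.eval ![t, s, 1 - t - s] σ₀ + t * MvPolynomial.eval ![t, s, 1 - t - s] σ₁
        + (1 - t - s) * MvPolynomial.eval ![t, s, 1 - t - s] σ₃ := by
    intro s
    rw [hA]
    simp only [Polynomial.eval_add, Polynomial.eval_mul, Polynomial.eval_sub,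
      Polynomial.eval_C, Polynomial.eval_X, hc]
  have hAnn : ∀ s : ℝ, s < 1 - t → 0 ≤ A.eval s := by
    intro s hs
    rw [hAeval]
    have n0 := sos_nonneg h0 ![t, s, 1 - t - s]
    have n1 := sos_nonneg h1 ![t, s, 1 - t - s]
    have n3 := sos_nonneg h3 ![t, s, 1 - t - s]
    nlinarith
  have hA0 : A.eval 0 = 0 := by
    have h := congrArg (Polynomial.eval 0) hid
    simp only [Polynomial.eval_add, Polynomial.eval_mul, Polynomial.eval_sub,
      Polynomial.eval_C, Polynomial.eval_X, hc, mul_zero, zero_mul, add_zero] at h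
    rw [hAeval]
    linarith
  obtain ⟨B, hB⟩ : Polynomial.X ∣ A := by
    rw [Polynomial.X_dvd_iff, Polynomial.coeff_zero_eq_eval_zero]
    exact hA0
  have hcancel : Polynomial.C t = B + φ σ₂ := by
    have hx : Polynomial.X * Polynomial.C t = Polynomial.X * (B + φ σ₂) := by
      rw [mul_add, ← hB, hA]
      linear_combination hid
    exact mul_left_cancel₀ Polynomial.X_ne_zero hx
  have hBpos : ∀ s : ℝ, 0 < s → s < 1 - t → 0 ≤ B.eval s := by
    intro s hs hs'
    have h := hAnn s hs'
    rw [hB, Polynomial.eval_mul, Polynomial.eval_X] at h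
    nlinarith
  have hBneg : ∀ s : ℝ, s < 0 → B.eval s ≤ 0 := by
    intro s hs
    have h := hAnn s (by linarith)
    rw [hB, Polynomial.eval_mul, Polynomial.eval_X] at h
    nlinarith
  have hB0 : B.eval 0 = 0 := by
    have hcont : ContinuousAt (fun s => B.eval s) 0 := (Polynomial.continuous B).continuousAt
    have hle : B.eval 0 ≤ 0 := by
      have hne : (nhdsWithin (0:ℝ) (Set.Iio 0)).NeBot := nhdsLT_neBot 0
      refine le_of_tendsto (hcont.continuousWithinAt (s := Set.Iio 0)) ?_
      filter_upwards [self_mem_nhdsWithin] with s hs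
      exact hBneg s hs
    have hge : 0 ≤ B.eval 0 := by
      have hne : (nhdsWithin (0:ℝ) (Set.Ioo 0 (1 - t))).NeBot := by
        apply IsGLB.nhdsWithin_neBot
        · exact isGLB_Ioo (by linarith)
        · exact Set.nonempty_Ioo.2 (by linarith)
      refine ge_of_tendsto (hcont.continuousWithinAt (s := Set.Ioo 0 (1 - t))) ?_
      filter_upwards [self_mem_nhdsWithin] with s hs
      exact hBpos s hs.1 hs.2
    linarith
  have h := congrArg (Polynomial.eval 0) hcancel
  simp only [Polynomial.eval_add, Polynomial.eval_C, hB0, zero_add, hc] at h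
  have hm : ![t, (0:ℝ), 1 - t - 0] = ![t, 0, 1 - t] := by norm_num
  rw [hm] at h
  exact h.symm

/-- The polynomial `x₁x₂` admits no representation
`x₁x₂ = σ₀ + x₁σ₁ + x₂σ₂ + x₃σ₃ + q(x₁+x₂+x₃−1)` with the `σᵢ` sums of squares;
hence the Lasserre hierarchy for `min{x₁x₂ : x ∈ Δ₃}` has no finite convergence. -/
theorem no_simplex_certificate_x1x2 :
    ¬ ∃ (σ₀ σ₁ σ₂ σ₃ q : MvPolynomial (Fin 3) ℝ),
      IsSOS σ₀ ∧ IsSOS σ₁ ∧ IsSOS σ₂ ∧ IsSOS σ₃ ∧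
      (X 0 * X 1 : MvPolynomial (Fin 3) ℝ) =
        σ₀ + X 0 * σ₁ + X 1 * σ₂ + X 2 * σ₃ + q * (X 0 + X 1 + X 2 - 1) := by
  rintro ⟨σ₀, σ₁, σ₂, σ₃, q, h0, h1, h2, h3, heq⟩
  -- the univariate polynomial t ↦ σ₂(t, 0, 1-t)
  set g : Fin 3 → Polynomial ℝ := ![Polynomial.X, 0, Polynomial.C 1 - Polynomial.X] with hg
  set P : Polynomial ℝ := MvPolynomial.aeval g σ₂ with hP
  have hPeval : ∀ u : ℝ, P.eval u = MvPolynomial.eval ![u, 0, 1 - u] σ₂ := by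
    intro u
    rw [hP, comp_lem]
    have hm : (fun i => Polynomial.eval u (g i)) = ![u, 0, 1 - u] := by
      funext i; fin_cases i <;> simp [hg]
    rw [hm]
  have hroot : ∀ u ∈ Set.Ioo (0:ℝ) 1, (P - Polynomial.X).IsRoot u := by
    intro u hu
    have := key σ₀ σ₁ σ₂ σ₃ q h0 h1 h3 heq u hu.1 hu.2
    simp [Polynomial.IsRoot, hPeval u, this]
  have hPX : P - Polynomial.X = 0 := by
    apply Polynomial.eq_zero_of_infinite_isRoot
    have hinf : (Set.Ioo (0:ℝ) 1).Infinite := Set.Ioo_infinite (by norm_num : (0:ℝ) < 1)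
    exact hinf.mono fun u hu => hroot u hu
  have hPeq : P = Polynomial.X := by linear_combination hPX
  have hneg : MvPolynomial.eval ![(-1 : ℝ), 0, 1 - (-1)] σ₂ = -1 := by
    rw [← hPeval, hPeq, Polynomial.eval_X]
  have := sos_nonneg h2 ![(-1 : ℝ), 0, 1 - (-1)]
  rw [hneg] at this
  linarith
end

section
/- Let G be acritical (no edge e with α(G∖e) = α(G)+1), S a maximum stable set, and x = χ^S/α(G). Then (M_G x)_i > 0 for every vertex i ∉ S. -/
/-!
A vertex `i ∉ S` with no neighbour in the maximum stable set `S` could be added to `S`; one with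
a single neighbour `j ∈ S` could be added after deleting the edge `ij`, which acriticality
forbids. So `i` has at least two neighbours in `S`, and evaluating `M_G` on `χ^S / α` is a
count: `α · N_S(i) / α - |S| / α = N_S(i) - 1`.
-/

open Matrix

def IsStableSet {n : ℕ} (G : SimpleGraph (Fin n)) (S : Finset (Fin n)) : Prop :=
  ∀ i ∈ S, ∀ j ∈ S, ¬ G.Adj i j

section StableSet

variable {n : ℕ}

theorem IsStableSet.anti {G H : SimpleGraph (Fin n)} (hHG : H ≤ G) {S : Finset (Fin n)}
    (hS : IsStableSet G S) : IsStableSet H S :=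
  fun i hi j hj hij => hS i hi j hj (hHG hij)

theorem IsStableSet.insert {G : SimpleGraph (Fin n)} {S : Finset (Fin n)} (hS : IsStableSet G S)
    {i : Fin n} (hi : ∀ j ∈ S, ¬ G.Adj i j) : IsStableSet G (insert i S) := by
  intro a ha b hb hab
  rcases Finset.mem_insert.1 ha with rfl | haS <;> rcases Finset.mem_insert.1 hb with rfl | hbS
  · exact G.loopless.irrefl _ hab
  · exact hi b hbS hab
  · exact hi a haS hab.symm
  · exact hS a haS b hbS hab

variable {G : SimpleGraph (Fin n)} [DecidableRel G.Adj] {S : Finset (Fin n)} {i : Fin n}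

theorem card_filter_adj_ne_zero_of_forall_card_le (hS : IsStableSet G S) (hi : i ∉ S)
    (hbound : ∀ T : Finset (Fin n), IsStableSet G T → T.card ≤ S.card) :
    (S.filter fun j => G.Adj i j).card ≠ 0 := by
  intro hzero
  have hnone : ∀ j ∈ S, ¬ G.Adj i j := fun j hj hij =>
    Finset.filter_eq_empty_iff.1 (Finset.card_eq_zero.1 hzero) hj hij
  have := hbound _ (hS.insert hnone)
  rw [Finset.card_insert_of_notMem hi] at this
  omega

theorem card_filter_adj_ne_one_of_acritical (hS : IsStableSet G S) (hi : i ∉ S)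
    (hacrit : ∀ u v : Fin n, G.Adj u v →
      ¬ ∃ T : Finset (Fin n), IsStableSet (G.deleteEdges {s(u, v)}) T ∧ T.card = S.card + 1) :
    (S.filter fun j => G.Adj i j).card ≠ 1 := by
  intro hone
  obtain ⟨j, hj⟩ := Finset.card_eq_one.1 hone
  have hj_mem : j ∈ S.filter fun j => G.Adj i j := hj ▸ Finset.mem_singleton_self j
  have hij : G.Adj i j := (Finset.mem_filter.1 hj_mem).2
  have hnone : ∀ a ∈ S, ¬ (G.deleteEdges {s(i, j)}).Adj i a := by
    intro a ha hia
    rw [SimpleGraph.deleteEdges_adj] at hia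
    have haj : a = j := Finset.mem_singleton.1 (hj ▸ Finset.mem_filter.2 ⟨ha, hia.1⟩)
    exact hia.2 (haj ▸ rfl)
  refine hacrit i j hij ⟨insert i S, (hS.anti (G.deleteEdges_le _)).insert hnone, ?_⟩
  exact Finset.card_insert_of_notMem hi

end StableSet

theorem mulVec_indicator_div_apply {V : Type*} [Fintype V] [DecidableEq V]
    (G : SimpleGraph V) [DecidableRel G.Adj] {c : ℝ} (hc : c ≠ 0) {S : Finset V} {i : V}
    (hi : i ∉ S) :
    ((c • (G.adjMatrix ℝ + 1) - Matrix.of fun _ _ => (1 : ℝ)) *ᵥ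
        fun j => (if j ∈ S then 1 else 0) / c) i
      = ((S.filter fun j => G.Adj i j).card : ℝ) - S.card / c := by
  have hsum : ∀ T : Finset V, ∑ j ∈ T, (if j ∈ S then (1 : ℝ) else 0) / c
      = ((T.filter (· ∈ S)).card : ℝ) / c := fun T => by
    rw [← Finset.sum_div, Finset.sum_boole]
  have hN : (G.neighborFinset i).filter (· ∈ S) = S.filter fun j => G.Adj i j := by
    ext j; simp [and_comm]
  simp only [sub_mulVec, smul_mulVec, add_mulVec, one_mulVec, Pi.sub_apply, Pi.smul_apply,
    Pi.add_apply, SimpleGraph.adjMatrix_mulVec_apply, smul_eq_mul, if_neg hi, zero_div, add_zero]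
  simp only [mulVec, dotProduct, of_apply, one_mul]
  rw [hsum, hsum, hN, Finset.filter_mem_eq_inter, Finset.univ_inter, mul_div_cancel₀ _ hc]

theorem acritical_strict_complementarity_general {n : ℕ} (G : SimpleGraph (Fin n))
    [DecidableRel G.Adj] (k : ℕ)
    (S : Finset (Fin n)) (hS : IsStableSet G S) (hcard : S.card = k)
    (hbound : ∀ T : Finset (Fin n), IsStableSet G T → T.card ≤ k)
    (hacrit : ∀ u v : Fin n, G.Adj u v →
      ¬ ∃ T : Finset (Fin n), IsStableSet (G.deleteEdges {s(u, v)}) T ∧ T.card = k + 1) :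
    ∀ i : Fin n, i ∉ S →
      2 ≤ (S.filter fun j => G.Adj i j).card ∧
      (((k : ℝ) • (G.adjMatrix ℝ + 1) - Matrix.of fun _ _ => (1 : ℝ)).mulVec
          (fun j => (if j ∈ S then 1 else 0) / k)) i
        = ((S.filter fun j => G.Adj i j).card : ℝ) - 1 ∧
      0 < (((k : ℝ) • (G.adjMatrix ℝ + 1) - Matrix.of fun _ _ => (1 : ℝ)).mulVec
          (fun j => (if j ∈ S then 1 else 0) / k)) i := by
  subst hcard
  intro i hi
  have hN₀ := card_filter_adj_ne_zero_of_forall_card_le hS hi hbound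
  have hN₁ := card_filter_adj_ne_one_of_acritical hS hi hacrit
  have hN : 2 ≤ (S.filter fun j => G.Adj i j).card := by omega
  have hk : (S.card : ℝ) ≠ 0 := by
    have := Finset.card_filter_le S fun j => G.Adj i j
    exact Nat.cast_ne_zero.2 (by omega)
  have hvalue := mulVec_indicator_div_apply G hk hi
  rw [div_self hk] at hvalue
  have hN' : (2 : ℝ) ≤ (S.filter fun j => G.Adj i j).card := by exact_mod_cast hN
  exact ⟨hN, hvalue, by linarith⟩

/-- If `G` is acritical (deleting any edge does not increase the stability number),
`S` is a maximum stable set and `x = χ^S/α(G)`, then every vertex `i ∉ S` has at least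
two neighbours in `S` and `(M_G x)_i = N_S(i) − 1 > 0`. -/
theorem acritical_strict_complementarity {n : ℕ} (G : SimpleGraph (Fin n))
    [DecidableRel G.Adj] (k : ℕ) (hk1 : 1 ≤ k)
    (S : Finset (Fin n)) (hS : IsStableSet G S) (hcard : S.card = k)
    (hbound : ∀ T : Finset (Fin n), IsStableSet G T → T.card ≤ k)
    (hacrit : ∀ u v : Fin n, G.Adj u v →
      ¬ ∃ T : Finset (Fin n), IsStableSet (G.deleteEdges {s(u, v)}) T ∧ T.card = k + 1) :
    ∀ i : Fin n, i ∉ S →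
      2 ≤ (S.filter fun j => G.Adj i j).card ∧
      (((k : ℝ) • (G.adjMatrix ℝ + 1) - Matrix.of fun _ _ => (1 : ℝ)).mulVec
          (fun j => (if j ∈ S then 1 else 0) / k)) i
        = ((S.filter fun j => G.Adj i j).card : ℝ) - 1 ∧
      0 < (((k : ℝ) • (G.adjMatrix ℝ + 1) - Matrix.of fun _ _ => (1 : ℝ)).mulVec
          (fun j => (if j ∈ S then 1 else 0) / k)) i :=
  acritical_strict_complementarity_general G k S hS hcard hbound hacrit
end

section
/- The Horn matrix is not positive semidefinite, but u^T H u = 0 for u = (1,0,1,0,0) and u = (1,0,0,1,0); moreover any 5×5 positive semidefinite matrix P with P ≤ H entrywise and Pu = 0 for all nonnegative zeros u of x^T H x must equal tJ for some t ≥ 0, which contradicts P ≤ H. -/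
/-!
The ten zeros are only five vectors, since `e_i + e_{i+3} = e_{i+3} + e_{(i+3)+2}`.
If `P` kills `e_i + e_{i+2}` for every `i`, then every row of `P` is antiperiodic under the
shift by `2` on `ℤ/5`; since `5` is odd, going once around the cycle gives `x = -x`, so `P = 0 = 0 • J`.
Finally `H₀₂ = -1 < 0 ≤ t`.
-/

open Matrix

/-- The vector `e_i + e_j` in `ℝ⁵`. -/
def eij (i j : Fin 5) : Fin 5 → ℝ :=
  fun m => (if m = i then 1 else 0) + (if m = j then 1 else 0)

theorem Function.Antiperiodic.eq_zero_of_odd_card {α β : Type*} [AddGroup α] [Fintype α]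
    [AddGroup β] [IsAddTorsionFree β] {f : α → β} {c : α} (h : Function.Antiperiodic f c)
    (hα : Odd (Fintype.card α)) : f = 0 := by
  obtain ⟨m, hm⟩ := hα
  have h_zero : Function.Antiperiodic f 0 := by
    simpa only [← hm, card_nsmul_eq_zero] using h.odd_nsmul_antiperiodic m
  funext x
  simpa only [add_zero, self_eq_neg, Pi.zero_apply] using h_zero x

theorem eij_eq_single_add_single (i j : Fin 5) : eij i j = Pi.single i 1 + Pi.single j 1 := by
  ext m
  simp [eij, Pi.single_apply]

theorem eij_comm (i j : Fin 5) : eij i j = eij j i := by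
  rw [eij_eq_single_add_single, eij_eq_single_add_single, add_comm]

theorem eij_dotProduct (i j : Fin 5) (v : Fin 5 → ℝ) : eij i j ⬝ᵥ v = v i + v j := by
  rw [eij_eq_single_add_single, add_dotProduct, single_one_dotProduct, single_one_dotProduct]

theorem mulVec_eij (M : Matrix (Fin 5) (Fin 5) ℝ) (i j : Fin 5) :
    M *ᵥ eij i j = M.col i + M.col j := by
  rw [eij_eq_single_add_single, mulVec_add, mulVec_single_one, mulVec_single_one]

theorem eij_dotProduct_mulVec_eij (M : Matrix (Fin 5) (Fin 5) ℝ) (i j : Fin 5) :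
    eij i j ⬝ᵥ M *ᵥ eij i j = M i i + M i j + (M j i + M j j) := by
  simp only [eij_dotProduct, mulVec_eij, Pi.add_apply, col_apply]

theorem eq_zero_of_mulVec_eij_add_two_eq_zero (P : Matrix (Fin 5) (Fin 5) ℝ)
    (hP : ∀ i, P *ᵥ eij i (i + 2) = 0) : P = 0 := by
  ext k
  have h_row : Function.Antiperiodic (P k) 2 := fun j => by
    have := congrFun (hP j) k
    rw [mulVec_eij, Pi.add_apply, col_apply, col_apply] at this
    exact eq_neg_of_add_eq_zero_right this
  exact congrFun (h_row.eq_zero_of_odd_card ⟨2, rfl⟩) _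

theorem hornMatrix_apply_self (i : Fin 5) : hornMatrix i i = 1 := by
  fin_cases i <;> simp [hornMatrix]

theorem hornMatrix_apply_add_two (i : Fin 5) : hornMatrix i (i + 2) = -1 := by
  fin_cases i <;> simp [hornMatrix]

theorem hornMatrix_add_two_apply (i : Fin 5) : hornMatrix (i + 2) i = -1 := by
  fin_cases i <;> simp [hornMatrix]

theorem eij_dotProduct_hornMatrix_mulVec_eij_add_two (i : Fin 5) :
    eij i (i + 2) ⬝ᵥ hornMatrix *ᵥ eij i (i + 2) = 0 := by
  rw [eij_dotProduct_mulVec_eij, hornMatrix_apply_self, hornMatrix_apply_self,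
    hornMatrix_apply_add_two, hornMatrix_add_two_apply]
  norm_num

theorem eij_add_three (i : Fin 5) : eij i (i + 3) = eij (i + 3) (i + 3 + 2) := by
  rw [add_assoc, show (3 + 2 : Fin 5) = 0 from rfl, add_zero, eij_comm]

theorem hornMatrix_not_posSemidef : ¬ hornMatrix.PosSemidef := fun h => by
  let x : Fin 5 → ℝ := ![1, -1, 1, -1, 0]
  have hx : star x ⬝ᵥ hornMatrix *ᵥ x = -4 := by
    simp [x, hornMatrix, mulVec, dotProduct, Fin.sum_univ_five]
    norm_num
  linarith [h.dotProduct_mulVec_nonneg x]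

/-- (a) The Horn matrix is not positive semidefinite, yet the ten nonnegative vectors
`e_i + e_{i+2}` and `e_i + e_{i+3}` (indices mod 5) are zeros of its quadratic form;
(b) any positive semidefinite `P` annihilating all these zeros is a nonnegative multiple
`tJ` of the all-ones matrix; (c) no such `tJ` with `t ≥ 0` is entrywise at most the
Horn matrix. -/
theorem horn_zeros_and_no_psd_below :
    (¬ hornMatrix.PosSemidef) ∧
    (∀ i : Fin 5,
      eij i (i + 2) ⬝ᵥ hornMatrix.mulVec (eij i (i + 2)) = 0 ∧
      eij i (i + 3) ⬝ᵥ hornMatrix.mulVec (eij i (i + 3)) = 0) ∧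
    (∀ P : Matrix (Fin 5) (Fin 5) ℝ, P.PosSemidef →
      (∀ i : Fin 5, P.mulVec (eij i (i + 2)) = 0 ∧ P.mulVec (eij i (i + 3)) = 0) →
      ∃ t : ℝ, 0 ≤ t ∧ P = Matrix.of fun _ _ => t) ∧
    (¬ ∃ t : ℝ, 0 ≤ t ∧ ∀ i j, t ≤ hornMatrix i j) := by
  refine ⟨hornMatrix_not_posSemidef, fun i => ⟨?_, ?_⟩, fun P _ hP => ⟨0, le_rfl, ?_⟩, ?_⟩
  · exact eij_dotProduct_hornMatrix_mulVec_eij_add_two i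
  · rw [eij_add_three]
    exact eij_dotProduct_hornMatrix_mulVec_eij_add_two (i + 3)
  · exact eq_zero_of_mulVec_eij_add_two_eq_zero P fun i => (hP i).1
  · rintro ⟨t, ht, hH⟩
    have := hornMatrix_apply_add_two 0 ▸ hH 0 (0 + 2)
    linarith
end
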